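/- Let d ≥ 2 be an integer and define F : ℂ → ℂ by F(z) = (z^{d+1} + (d−1)z)/d. Then for every z ∈ ℂ with |z| < 1, the iterates F^{∘k}(z) converge to 0 as k → ∞. -/

import Mathlib

open Filter Topology

/-!
Near the origin `F` is a contraction: writing `F w = w · (w^d + d - 1)/d`, on the disk `|w| ≤ r`
with `r < 1` one has `|F w| ≤ c |w|` with `c = (r^d + d - 1)/d < 1`. Starting from `|z| = r`,
the orbit stays in that disk and `|F^k z| ≤ c^k |z| → 0`.
-/

section Contraction

variable {E : Type*} [SeminormedAddGroup E] {f : E → E} {c r : ℝ}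

theorem norm_iterate_le_pow_mul_of_norm_le_mul (hc0 : 0 ≤ c) (hc1 : c ≤ 1)
    (hf : ∀ w, ‖w‖ ≤ r → ‖f w‖ ≤ c * ‖w‖) {z : E} (hz : ‖z‖ ≤ r) (k : ℕ) :
    ‖f^[k] z‖ ≤ c ^ k * ‖z‖ := by
  induction k with
  | zero => simp
  | succ k ih =>
    have hk : ‖f^[k] z‖ ≤ r := by
      calc ‖f^[k] z‖ ≤ c ^ k * ‖z‖ := ih
        _ ≤ 1 * ‖z‖ := by gcongr; exact pow_le_one₀ hc0 hc1
        _ ≤ r := by rwa [one_mul]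
    calc ‖f^[k + 1] z‖ = ‖f (f^[k] z)‖ := by rw [Function.iterate_succ_apply']
      _ ≤ c * ‖f^[k] z‖ := hf _ hk
      _ ≤ c * (c ^ k * ‖z‖) := by gcongr
      _ = c ^ (k + 1) * ‖z‖ := by ring

theorem tendsto_iterate_nhds_zero_of_norm_le_mul (hc0 : 0 ≤ c) (hc1 : c < 1)
    (hf : ∀ w, ‖w‖ ≤ r → ‖f w‖ ≤ c * ‖w‖) {z : E} (hz : ‖z‖ ≤ r) :
    Tendsto (fun k => f^[k] z) atTop (𝓝 0) := by
  rw [tendsto_zero_iff_norm_tendsto_zero]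
  have hlim : Tendsto (fun k : ℕ => c ^ k * ‖z‖) atTop (𝓝 0) := by
    simpa using (tendsto_pow_atTop_nhds_zero_of_lt_one hc0 hc1).mul_const ‖z‖
  exact squeeze_zero (fun _ => norm_nonneg _)
    (norm_iterate_le_pow_mul_of_norm_le_mul hc0 hc1.le hf hz) hlim

end Contraction

theorem norm_newton_map_le {d : ℕ} (hd : 1 ≤ d) {r : ℝ} {w : ℂ} (hw : ‖w‖ ≤ r) :
    ‖(w ^ (d + 1) + ((d : ℂ) - 1) * w) / d‖ ≤ (r ^ d + ((d : ℝ) - 1)) / d * ‖w‖ := by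
  have hfactor : (w ^ (d + 1) + ((d : ℂ) - 1) * w) / d = w * ((w ^ d + ((d - 1 : ℕ) : ℂ)) / d) := by
    push_cast [Nat.cast_sub hd]
    ring
  have hsum : ‖w ^ d + ((d - 1 : ℕ) : ℂ)‖ ≤ r ^ d + ((d : ℝ) - 1) := by
    calc ‖w ^ d + ((d - 1 : ℕ) : ℂ)‖ ≤ ‖w‖ ^ d + (d - 1 : ℕ) := by
          simpa only [norm_pow, Complex.norm_natCast] using norm_add_le (w ^ d) ((d - 1 : ℕ) : ℂ)
      _ ≤ r ^ d + ((d : ℝ) - 1) := by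
          rw [Nat.cast_sub hd, Nat.cast_one]
          gcongr
  rw [hfactor, norm_mul, norm_div, Complex.norm_natCast, mul_comm]
  gcongr

theorem newton_contraction_factor_lt_one {d : ℕ} (hd : 1 ≤ d) {r : ℝ} (hr0 : 0 ≤ r)
    (hr1 : r < 1) : (r ^ d + ((d : ℝ) - 1)) / d < 1 := by
  have hd0 : (0 : ℝ) < d := by exact_mod_cast hd
  rw [div_lt_one hd0]
  linarith [pow_lt_one₀ hr0 hr1 (by omega : d ≠ 0)]

/-- For `F(z) = (z^(d+1) + (d-1)z)/d`, the Newton map of `z^d/(z^d - 1)`, the open unit disk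
is contained in the attracting basin of the origin: `F^[k] z → 0` for every `|z| < 1`. -/
theorem unit_disk_in_basin
    (d : ℕ) (hd : 2 ≤ d) (F : ℂ → ℂ)
    (hF : ∀ z, F z = (z ^ (d + 1) + ((d : ℂ) - 1) * z) / (d : ℂ))
    (z : ℂ) (hz : ‖z‖ < 1) :
    Tendsto (fun k => F^[k] z) atTop (𝓝 0) := by
  have hd1 : 1 ≤ d := by omega
  have hc0 : 0 ≤ (‖z‖ ^ d + ((d : ℝ) - 1)) / d := by
    have : (1 : ℝ) ≤ d := by exact_mod_cast hd1
    positivity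
  refine tendsto_iterate_nhds_zero_of_norm_le_mul hc0
    (newton_contraction_factor_lt_one hd1 (norm_nonneg z) hz) (fun w hw => ?_) le_rfl
  rw [hF]
  exact norm_newton_map_le hd1 hw
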